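/- arXiv:math/0310350 — 2 statements merged into one kernel-verified Lean document; each statement's English description precedes it below -/
import Mathlib

section
/- For every r > 0 and every z with |z| = 1 and z ≠ 1, the real part of S_r(z) equals 0. -/
open Complex Filter Topology

/-- Partial symmetric sums of the annulus Schwarz kernel
`S_r(z) = lim_{N→∞} Σ_{k=-N}^{N} (e^{2kr}+z)/(e^{2kr}-z)`. -/
noncomputable def annulusSum (r : ℝ) (z : ℂ) (N : ℕ) : ℂ :=
  ∑ k ∈ Finset.Icc (-(N : ℤ)) (N : ℤ),
    (Complex.exp (2 * (k : ℂ) * (r : ℂ)) + z) / (Complex.exp (2 * (k : ℂ) * (r : ℂ)) - z)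

/-!
Write `t(a) = (a + z) / (a - z)`. For real `a ≠ 0` and `|z| = 1`, multiplying numerator and
denominator of `t(a⁻¹)` by `a z⁻¹ = a conj z` gives `t(a⁻¹) = -conj t(a)`. So `t(1)` and each pair
`t(q^k) + t(q^(-k)) = t - conj t` of the symmetric partial sum (with `q = e^(2r)`) are purely
imaginary. Since `t(a) - 1 = 2z / (a - z)`, a pair has norm at most `4 / (q^k - 1)`, which is
dominated by a geometric series in `q⁻¹`; hence the partial sums converge, and the limit is
purely imaginary as well.
-/

open Finset ComplexConjugate

theorem Finset.sum_Icc_neg_natCast_eq_add_sum_range {M : Type*} [AddCommGroup M] (f : ℤ → M)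
    (N : ℕ) :
    ∑ k ∈ Icc (-(N : ℤ)) N, f k = f 0 + ∑ n ∈ range N, (f (n + 1) + f (-(n + 1))) := by
  induction N with
  | zero => simp
  | succ N ih =>
    rw [Nat.cast_succ, sum_Icc_succ_eq_add_endpoints, ih, sum_range_succ]
    abel

noncomputable def schwarzTerm (z a : ℂ) : ℂ := (a + z) / (a - z)

section SchwarzTerm

variable {z : ℂ}

theorem schwarzTerm_inv (hz : ‖z‖ = 1) {a : ℝ} (ha : a ≠ 0) :
    schwarzTerm z (a : ℂ)⁻¹ = -conj (schwarzTerm z a) := by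
  have hz0 : z ≠ 0 := norm_ne_zero_iff.mp (by simp [hz])
  have ha' : (a : ℂ) ≠ 0 := ofReal_ne_zero.mpr ha
  have hc : (a : ℂ)⁻¹ * z ≠ 0 := mul_ne_zero (inv_ne_zero ha') hz0
  rw [schwarzTerm, schwarzTerm, map_div₀, map_add, map_sub, conj_ofReal, ← inv_eq_conj hz]
  calc ((a : ℂ)⁻¹ + z) / ((a : ℂ)⁻¹ - z)
      = ((z⁻¹ + a) * ((a : ℂ)⁻¹ * z)) / ((z⁻¹ - a) * ((a : ℂ)⁻¹ * z)) := by
        congr 1 <;> field_simp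
    _ = (z⁻¹ + a) / (z⁻¹ - a) := mul_div_mul_right _ _ hc
    _ = -((a + z⁻¹) / (a - z⁻¹)) := by rw [← div_neg, neg_sub, add_comm]

theorem re_schwarzTerm_add_schwarzTerm_inv (hz : ‖z‖ = 1) {a : ℝ} (ha : a ≠ 0) :
    (schwarzTerm z a + schwarzTerm z (a : ℂ)⁻¹).re = 0 := by
  simp [schwarzTerm_inv hz ha]

theorem norm_schwarzTerm_sub_one_le (hz : ‖z‖ = 1) {a : ℝ} (ha : 1 < a) :
    ‖schwarzTerm z a - 1‖ ≤ 2 / (a - 1) := by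
  have hdist : a - 1 ≤ ‖(a : ℂ) - z‖ := by
    simpa [hz, abs_of_pos (zero_lt_one.trans ha)] using norm_sub_norm_le (a : ℂ) z
  have hne : (a : ℂ) - z ≠ 0 := norm_pos_iff.mp (by linarith)
  have hsub : schwarzTerm z a - 1 = 2 * z / (a - z) := by
    rw [schwarzTerm, div_sub_one hne]
    ring
  rw [hsub, norm_div, norm_mul, hz, Complex.norm_two, mul_one]
  exact div_le_div_of_nonneg_left zero_le_two (by linarith) hdist

theorem norm_schwarzTerm_add_schwarzTerm_inv_le (hz : ‖z‖ = 1) {a : ℝ} (ha : 1 < a) :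
    ‖schwarzTerm z a + schwarzTerm z (a : ℂ)⁻¹‖ ≤ 4 / (a - 1) := by
  rw [schwarzTerm_inv hz (by positivity)]
  calc ‖schwarzTerm z a + -conj (schwarzTerm z a)‖
      = ‖(schwarzTerm z a - 1) - conj (schwarzTerm z a - 1)‖ := by simp [sub_eq_add_neg]
    _ ≤ ‖schwarzTerm z a - 1‖ + ‖conj (schwarzTerm z a - 1)‖ := norm_sub_le _ _
    _ ≤ 2 / (a - 1) + 2 / (a - 1) := by
        rw [RCLike.norm_conj]
        gcongr <;> exact norm_schwarzTerm_sub_one_le hz ha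
    _ = 4 / (a - 1) := by ring

theorem re_schwarzTerm_one (hz : ‖z‖ = 1) : (schwarzTerm z 1).re = 0 := by
  have h := congrArg re (schwarzTerm_inv hz one_ne_zero)
  simp only [ofReal_one, inv_one, neg_re, conj_re] at h
  linarith

theorem summable_schwarzTerm_pow_add_schwarzTerm_inv (hz : ‖z‖ = 1) {q : ℝ} (hq : 1 < q) :
    Summable fun n : ℕ => schwarzTerm z ↑(q ^ (n + 1)) + schwarzTerm z (↑(q ^ (n + 1)))⁻¹ := by
  have hq0 : 0 < q := zero_lt_one.trans hq
  have hgeom := summable_geometric_of_lt_one (inv_nonneg.mpr hq0.le) (inv_lt_one_of_one_lt₀ hq)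
  refine Summable.of_norm_bounded (hgeom.mul_left (4 / (q - 1))) fun n =>
    (norm_schwarzTerm_add_schwarzTerm_inv_le hz (one_lt_pow₀ hq n.succ_ne_zero)).trans ?_
  have hgap : q ^ n * (q - 1) ≤ q ^ (n + 1) - 1 := by
    nlinarith [one_le_pow₀ (n := n) hq.le, pow_succ q n]
  calc 4 / (q ^ (n + 1) - 1) ≤ 4 / (q ^ n * (q - 1)) :=
        div_le_div_of_nonneg_left zero_le_four (mul_pos (pow_pos hq0 n) (sub_pos.mpr hq)) hgap
    _ = 4 / (q - 1) * q⁻¹ ^ n := by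
        rw [inv_pow]
        field_simp

theorem exists_tendsto_sum_schwarzTerm_zpow (hz : ‖z‖ = 1) {q : ℝ} (hq : 1 < q) :
    ∃ S : ℂ, Tendsto (fun N : ℕ => ∑ k ∈ Icc (-(N : ℤ)) N, schwarzTerm z ↑(q ^ k)) atTop (𝓝 S) ∧
      S.re = 0 := by
  set pair : ℕ → ℂ := fun n => schwarzTerm z ↑(q ^ (n + 1)) + schwarzTerm z (↑(q ^ (n + 1)))⁻¹
  have hsplit (N : ℕ) : ∑ k ∈ Icc (-(N : ℤ)) N, schwarzTerm z ↑(q ^ k) =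
      schwarzTerm z 1 + ∑ n ∈ range N, pair n := by
    simp only [sum_Icc_neg_natCast_eq_add_sum_range, pair, zpow_zero, ofReal_one, ← Nat.cast_succ,
      zpow_neg, zpow_natCast, ofReal_inv]
  have hre (N : ℕ) : (schwarzTerm z 1 + ∑ n ∈ range N, pair n).re = 0 := by
    rw [add_re, re_sum, re_schwarzTerm_one hz, zero_add]
    exact sum_eq_zero fun n _ => re_schwarzTerm_add_schwarzTerm_inv hz (by positivity)
  have hlim := (summable_schwarzTerm_pow_add_schwarzTerm_inv hz hq).hasSum.tendsto_sum_nat.const_add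
    (schwarzTerm z 1)
  refine ⟨_, by simpa only [hsplit] using hlim, ?_⟩
  exact (isClosed_eq continuous_re continuous_const).mem_of_tendsto hlim (Eventually.of_forall hre)

end SchwarzTerm

theorem annulusSum_eq_sum_schwarzTerm (r : ℝ) (z : ℂ) (N : ℕ) :
    annulusSum r z N = ∑ k ∈ Icc (-(N : ℤ)) N, schwarzTerm z ↑(Real.exp (2 * r) ^ k) := by
  refine sum_congr rfl fun k _ => ?_
  have hexp : Complex.exp (2 * k * r) = ↑(Real.exp (2 * r) ^ k) := by
    rw [ofReal_zpow, ofReal_exp, ← exp_int_mul]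
    push_cast
    ring_nf
  rw [schwarzTerm, hexp]

theorem stmt2_general (r : ℝ) (hr : 0 < r) (z : ℂ) (hz : ‖z‖ = 1) :
    ∃ S : ℂ, Tendsto (fun N => annulusSum r z N) atTop (𝓝 S) ∧ S.re = 0 := by
  simp_rw [annulusSum_eq_sum_schwarzTerm]
  exact exists_tendsto_sum_schwarzTerm_zpow hz (Real.one_lt_exp_iff.mpr (by positivity))

/-- For every `r > 0` and every `z` with `|z| = 1`, `z ≠ 1`, `Re S_r(z) = 0`. -/
theorem stmt2 (r : ℝ) (hr : 0 < r) (z : ℂ) (hz : ‖z‖ = 1) (hz1 : z ≠ 1) :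
    ∃ S : ℂ, Tendsto (fun N => annulusSum r z N) atTop (𝓝 S) ∧ S.re = 0 :=
  stmt2_general r hr z hz
end

section
/- For every p > 0 and every z with 4e^{-p} ≤ |z| ≤ 1, the function Ŝ_p(z) := 1 − S_p(e^{-p}/z) satisfies |Ŝ_p(z)| ≤ 8 e^{-p} / |z|. -/
/-
Pair the terms `k` and `-k` of the symmetric sum: with `t = e^{2kp}`,
`(t + w)/(t - w) + (t⁻¹ + w)/(t⁻¹ - w) = 2 (w/(t - w) - t⁻¹/(w - t⁻¹))`, and both fractions are
small once `4|w| ≤ 1 ≤ t` and `4 t⁻¹ ≤ |w|`. Since `e^{-p} ≤ |w| ≤ 1/4` for `w = e^{-p}/z`, the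
pair is at most `(17/6) |w| 16^{-(k-1)}`, so the symmetric partial sums converge and `1 - S` is
bounded by the `k = 0` term `2w/(1 - w)` plus a geometric tail: `(8/3 + 136/45) |w| ≤ 8 |w|`.
-/

open Complex Filter Topology

lemma Finset.sum_Icc_neg_eq_add_sum_range {G : Type*} [AddCommGroup G] (f : ℤ → G) (N : ℕ) :
    ∑ k ∈ Finset.Icc (-(N : ℤ)) N, f k
      = f 0 + ∑ n ∈ Finset.range N, (f (n + 1) + f (-(n + 1))) := by
  induction N with
  | zero => simp
  | succ N ih =>
    rw [Nat.cast_succ, Finset.sum_Icc_succ_eq_add_endpoints, ih, Finset.sum_range_succ]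
    abel

section NormedField

variable {K : Type*} [NormedField K]

lemma norm_div_sub_le_of_four_mul_norm_le {x y : K} (h : 4 * ‖y‖ ≤ ‖x‖) :
    ‖y / (x - y)‖ ≤ 4 / 3 * (‖y‖ / ‖x‖) := by
  rcases (norm_nonneg x).eq_or_lt with hx | hx
  · have : y = 0 := norm_le_zero_iff.1 (by linarith [norm_nonneg y])
    simp [this]
  have hxy : 3 / 4 * ‖x‖ ≤ ‖x - y‖ := by linarith [norm_sub_norm_le x y]
  rw [norm_div, div_le_iff₀ (by linarith)]
  calc ‖y‖ = 4 / 3 * (‖y‖ / ‖x‖) * (3 / 4 * ‖x‖) := by field_simp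
    _ ≤ 4 / 3 * (‖y‖ / ‖x‖) * ‖x - y‖ := by gcongr

lemma norm_two_le : ‖(2 : K)‖ ≤ 2 := by
  simpa [one_add_one_eq_two] using norm_add_le (1 : K) 1

lemma norm_one_sub_one_add_div_one_sub_le {w : K} (hw : 4 * ‖w‖ ≤ 1) :
    ‖1 - (1 + w) / (1 - w)‖ ≤ 8 / 3 * ‖w‖ := by
  have hw1 : 1 - w ≠ 0 := fun h => by
    rw [← sub_eq_zero.1 h, norm_one] at hw; linarith
  have key : 1 - (1 + w) / (1 - w) = -(2 * (w / (1 - w))) := by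
    field_simp; ring
  have h := norm_div_sub_le_of_four_mul_norm_le (x := (1 : K)) (by simpa using hw)
  rw [norm_one, div_one] at h
  rw [key, norm_neg]
  calc ‖2 * (w / (1 - w))‖ ≤ 2 * ‖w / (1 - w)‖ := by
        rw [norm_mul]; gcongr; exact norm_two_le
    _ ≤ 8 / 3 * ‖w‖ := by linarith

lemma norm_add_div_sub_add_add_div_sub_le {t s w : K} (hw : w ≠ 0) (ht : 4 * ‖w‖ ≤ ‖t‖)
    (hs : 4 * ‖s‖ ≤ ‖w‖) :
    ‖(t + w) / (t - w) + (s + w) / (s - w)‖ ≤ 8 / 3 * (‖w‖ / ‖t‖ + ‖s‖ / ‖w‖) := by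
  have hw' : 0 < ‖w‖ := norm_pos_iff.2 hw
  have htw : t - w ≠ 0 := fun h => by rw [sub_eq_zero.1 h] at ht; linarith
  have hsw : s - w ≠ 0 := fun h => by rw [sub_eq_zero.1 h] at hs; linarith
  have key : (t + w) / (t - w) + (s + w) / (s - w) = 2 * (w / (t - w) - s / (w - s)) := by
    rw [← neg_sub s w]
    field_simp
    ring
  rw [key]
  calc ‖2 * (w / (t - w) - s / (w - s))‖
      ≤ 2 * (‖w / (t - w)‖ + ‖s / (w - s)‖) := by
        rw [norm_mul]; gcongr
        · exact norm_two_le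
        · exact norm_sub_le _ _
    _ ≤ 8 / 3 * (‖w‖ / ‖t‖ + ‖s‖ / ‖w‖) := by
        linarith [norm_div_sub_le_of_four_mul_norm_le ht,
          norm_div_sub_le_of_four_mul_norm_le hs]

end NormedField

noncomputable def annulusTerm (p : ℝ) (w : ℂ) (k : ℤ) : ℂ :=
  (Complex.exp (2 * (k : ℂ) * (p : ℂ)) + w) / (Complex.exp (2 * (k : ℂ) * (p : ℂ)) - w)

lemma annulusSum_eq_add_sum_range (p : ℝ) (w : ℂ) (N : ℕ) :
    annulusSum p w N = annulusTerm p w 0 +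
      ∑ n ∈ Finset.range N, (annulusTerm p w (n + 1) + annulusTerm p w (-(n + 1))) :=
  Finset.sum_Icc_neg_eq_add_sum_range (annulusTerm p w) N

lemma annulusTerm_zero (p : ℝ) (w : ℂ) : annulusTerm p w 0 = (1 + w) / (1 - w) := by
  simp [annulusTerm]

lemma norm_exp_two_mul_intCast_mul (p : ℝ) (k : ℤ) :
    ‖Complex.exp (2 * (k : ℂ) * (p : ℂ))‖ = Real.exp (2 * k * p) := by
  rw [Complex.norm_exp]
  norm_cast

lemma norm_annulusTerm_add_annulusTerm_neg_le {p : ℝ} {w : ℂ} (hpw : Real.exp (-p) ≤ ‖w‖)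
    (hw : ‖w‖ ≤ 1 / 4) (n : ℕ) :
    ‖annulusTerm p w (n + 1) + annulusTerm p w (-(n + 1))‖ ≤ 17 / 6 * ‖w‖ * (1 / 16) ^ n := by
  set q := Real.exp (-p)
  set r := Real.exp (-(2 * (n + 1) * p))
  have hq : 0 < q := Real.exp_pos _
  have hr : 0 < r := Real.exp_pos _
  have hw0 : 0 < ‖w‖ := hq.trans_le hpw
  have hr_eq : r = q ^ 2 * (q ^ 2) ^ n := by
    rw [← pow_succ', ← pow_mul, ← Real.exp_nat_mul]
    simp only [r]; congr 1; push_cast; ring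
  have hq2 : q ^ 2 ≤ 1 / 16 := by nlinarith
  have hr_le : r ≤ q ^ 2 * (1 / 16) ^ n := by
    rw [hr_eq]; gcongr
  have hnorm_pos : ‖Complex.exp (2 * ((n + 1 : ℤ) : ℂ) * p)‖ = r⁻¹ := by
    rw [norm_exp_two_mul_intCast_mul, ← Real.exp_neg]; congr 1; push_cast; ring
  have hnorm_neg : ‖Complex.exp (2 * ((-(n + 1) : ℤ) : ℂ) * p)‖ = r := by
    rw [norm_exp_two_mul_intCast_mul]; congr 1; push_cast; ring
  have hr_q2 : r ≤ q ^ 2 := hr_le.trans (mul_le_of_le_one_right (by positivity)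
    (pow_le_one₀ (by norm_num) (by norm_num)))
  unfold annulusTerm
  refine (norm_add_div_sub_add_add_div_sub_le (norm_pos_iff.1 hw0) ?_ ?_).trans ?_
  · rw [hnorm_pos]
    exact (by linarith : 4 * ‖w‖ ≤ 1).trans (one_le_inv₀ hr |>.2 (by linarith))
  · rw [hnorm_neg]; nlinarith
  · rw [hnorm_pos, hnorm_neg, div_inv_eq_mul]
    have h1 : ‖w‖ * r ≤ ‖w‖ / 16 * (1 / 16) ^ n := by
      calc ‖w‖ * r ≤ ‖w‖ * (q ^ 2 * (1 / 16) ^ n) := by gcongr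
        _ ≤ ‖w‖ / 16 * (1 / 16) ^ n := by
          rw [← mul_assoc]; gcongr; nlinarith
    have h2 : r / ‖w‖ ≤ ‖w‖ * (1 / 16) ^ n := by
      rw [div_le_iff₀ hw0]
      calc r ≤ q ^ 2 * (1 / 16) ^ n := hr_le
        _ ≤ ‖w‖ ^ 2 * (1 / 16) ^ n := by gcongr
        _ = _ := by ring
    linarith

theorem exists_tendsto_annulusSum_and_norm_one_sub_le {p : ℝ} {w : ℂ}
    (hpw : Real.exp (-p) ≤ ‖w‖) (hw : ‖w‖ ≤ 1 / 4) :
    ∃ S, Tendsto (annulusSum p w) atTop (𝓝 S) ∧ ‖1 - S‖ ≤ 8 * ‖w‖ := by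
  set g : ℕ → ℂ := fun n => annulusTerm p w (n + 1) + annulusTerm p w (-(n + 1))
  have hbound := norm_annulusTerm_add_annulusTerm_neg_le hpw hw
  have hgeom : HasSum (fun n : ℕ => 17 / 6 * ‖w‖ * (1 / 16) ^ n) (17 / 6 * ‖w‖ * (1 - 1 / 16)⁻¹) :=
    (hasSum_geometric_of_lt_one (by norm_num) (by norm_num)).mul_left _
  have hg : Summable g := hgeom.summable.of_norm_bounded hbound
  refine ⟨annulusTerm p w 0 + ∑' n, g n, ?_, ?_⟩
  · rw [show annulusSum p w = _ from funext (annulusSum_eq_add_sum_range p w)]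
    exact hg.hasSum.tendsto_sum_nat.const_add _
  · have hT : ‖∑' n, g n‖ ≤ 17 / 6 * ‖w‖ * (1 - 1 / 16)⁻¹ := tsum_of_norm_bounded hgeom hbound
    have h0 : ‖1 - annulusTerm p w 0‖ ≤ 8 / 3 * ‖w‖ := by
      rw [annulusTerm_zero]; exact norm_one_sub_one_add_div_one_sub_le (by linarith)
    calc ‖1 - (annulusTerm p w 0 + ∑' n, g n)‖ = ‖(1 - annulusTerm p w 0) - ∑' n, g n‖ := by
          ring_nf
      _ ≤ ‖1 - annulusTerm p w 0‖ + ‖∑' n, g n‖ := norm_sub_le _ _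
      _ ≤ 8 * ‖w‖ := by norm_num at hT ⊢; linarith [norm_nonneg w]

theorem stmt8_general (p : ℝ) (z : ℂ)
    (h1 : 4 * Real.exp (-p) ≤ ‖z‖) (h2 : ‖z‖ ≤ 1) :
    ∃ S : ℂ,
      Tendsto (fun N => annulusSum p ((Real.exp (-p) : ℂ) / z) N) atTop (𝓝 S) ∧
      ‖1 - S‖ ≤ 8 * Real.exp (-p) / ‖z‖ := by
  have hq : 0 < Real.exp (-p) := Real.exp_pos _
  have hz : 0 < ‖z‖ := by linarith
  have hw : ‖(Real.exp (-p) : ℂ) / z‖ = Real.exp (-p) / ‖z‖ := by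
    rw [norm_div, Complex.norm_real, Real.norm_of_nonneg hq.le]
  obtain ⟨S, hS, hbound⟩ := exists_tendsto_annulusSum_and_norm_one_sub_le
    (p := p) (w := (Real.exp (-p) : ℂ) / z)
    (by rw [hw, le_div_iff₀ hz]; nlinarith) (by rw [hw, div_le_iff₀ hz]; linarith)
  exact ⟨S, hS, by rwa [hw, ← mul_div_assoc] at hbound⟩

/-- For every `p > 0` and every `z` with `4e^{-p} ≤ |z| ≤ 1`, the function
`Ŝ_p(z) = 1 − S_p(e^{-p}/z)` satisfies `|Ŝ_p(z)| ≤ 8e^{-p}/|z|`. -/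
theorem stmt8 (p : ℝ) (hp : 0 < p) (z : ℂ)
    (h1 : 4 * Real.exp (-p) ≤ ‖z‖) (h2 : ‖z‖ ≤ 1) :
    ∃ S : ℂ,
      Tendsto (fun N => annulusSum p ((Real.exp (-p) : ℂ) / z) N) atTop (𝓝 S) ∧
      ‖1 - S‖ ≤ 8 * Real.exp (-p) / ‖z‖ :=
  stmt8_general p z h1 h2
end
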